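/- Let L be a Moufang loop of class at most 2. Then for all c, d, κ ∈ L, the κ-isotope product satisfies (cκ)(κ⁻¹d) = (cd)·[c,κ,d]. -/

import Mathlib

/-- An inverse property loop: a set with multiplication, identity, and two-sided
inverses satisfying `a⁻¹(ax) = x = (xa)a⁻¹`. -/
class IPLoop (L : Type*) extends Mul L, One L, Inv L where
  one_mul : ∀ a : L, 1 * a = a
  mul_one : ∀ a : L, a * 1 = a
  inv_mul_cancel_left : ∀ a x : L, a⁻¹ * (a * x) = x
  mul_inv_cancel_right : ∀ a x : L, (x * a) * a⁻¹ = x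

namespace IPLoop

variable {L : Type*} [IPLoop L]

/-- Powers with natural number exponent, `c^(n+1) = c * c^n`. -/
def npow (c : L) : ℕ → L
  | 0 => 1
  | n + 1 => c * npow c n

instance : Pow L ℕ := ⟨npow⟩

/-- Powers with integer exponent. -/
def zpow (c : L) : ℤ → L
  | Int.ofNat n => c ^ n
  | Int.negSucc n => (c ^ (n + 1))⁻¹

instance : Pow L ℤ := ⟨zpow⟩

/-- The commutator `[c,d] = (dc)⁻¹(cd)`. -/
def comm (c d : L) : L := (d * c)⁻¹ * (c * d)

/-- The associator `[c,d,e] = (c(de))⁻¹((cd)e)`. -/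
def assoc (c d e : L) : L := (c * (d * e))⁻¹ * ((c * d) * e)

/-- Membership in the center `Z(L)`. -/
def inCenter (z : L) : Prop :=
  (∀ x : L, comm z x = 1) ∧
  ∀ x y : L, assoc z x y = 1 ∧ assoc x z y = 1 ∧ assoc x y z = 1

/-- The Moufang identity `((dc)e)c = d(c(ec))`. -/
def IsMoufang (L : Type*) [IPLoop L] : Prop :=
  ∀ c d e : L, ((d * c) * e) * c = d * (c * (e * c))

/-- A loop is of (central nilpotence) class at most 2 if every commutator and
every associator lies in the center. -/
def ClassTwo (L : Type*) [IPLoop L] : Prop :=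
  (∀ c d : L, inCenter (comm c d)) ∧ ∀ c d e : L, inCenter (assoc c d e)

/-- The order of an element: least `n > 0` with `c^n = 1` (or `0` if none). -/
noncomputable def ordOf (c : L) : ℕ := sInf {n : ℕ | 0 < n ∧ c ^ n = 1}

/-- The subloop generated by a subset `S`. -/
def subloopClosure (S : Set L) : Set L :=
  ⋂₀ {T : Set L | (1 : L) ∈ T ∧ (∀ x ∈ T, x⁻¹ ∈ T) ∧
      (∀ x ∈ T, ∀ y ∈ T, x * y ∈ T) ∧ S ⊆ T}

end IPLoop

/-! Writing `(pq)r = (p(qr))·[p,q,r]` with central associators, `(cκ)(κ⁻¹d)` becomes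
`(cd)·[c,κ,κ⁻¹d]`, so it suffices that `[x,y,yz] = [x,y,z]`. The Moufang identity together
with flexibility gives `[p,qr,q] = [p,q,r]⁻¹`, and the inverse property alone gives
`[p,qr,r⁻¹] = [p,q,r]⁻¹`. For `q = yz` and `r = z⁻¹` we have `qr = y`, and the two identities
combine to `[x,y,yz] = [x,yz,z⁻¹]⁻¹ = [x,y,z]`. -/

namespace IPLoop

variable {L : Type*} [IPLoop L]

protected lemma inv_mul_cancel (a : L) : a⁻¹ * a = 1 := by
  simpa only [mul_one] using inv_mul_cancel_left a 1

protected lemma inv_inv (a : L) : a⁻¹⁻¹ = a := by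
  simpa only [IPLoop.inv_mul_cancel, mul_one] using inv_mul_cancel_left a⁻¹ a

protected lemma mul_inv_cancel_left (a x : L) : a * (a⁻¹ * x) = x := by
  simpa only [IPLoop.inv_inv] using inv_mul_cancel_left a⁻¹ x

protected lemma mul_left_cancel {a b c : L} (h : a * b = a * c) : b = c := by
  rw [← inv_mul_cancel_left a b, h, inv_mul_cancel_left]

lemma eq_of_inv_mul_eq_one {u v : L} (h : u⁻¹ * v = 1) : v = u := by
  rw [← IPLoop.mul_inv_cancel_left u v, h, mul_one]

lemma mul_mul_eq_mul_mul_assoc (p q r : L) : (p * q) * r = (p * (q * r)) * assoc p q r :=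
  (IPLoop.mul_inv_cancel_left _ _).symm

namespace inCenter

variable {z : L} (hz : inCenter z)
include hz

protected lemma mul_comm (x : L) : z * x = x * z :=
  eq_of_inv_mul_eq_one (hz.1 x)

protected lemma mul_assoc (x y : L) : (x * y) * z = x * (y * z) :=
  eq_of_inv_mul_eq_one (hz.2 x y).2.2

protected lemma mul_right_comm (x y : L) : (x * z) * y = (x * y) * z := by
  rw [eq_of_inv_mul_eq_one (hz.2 x y).2.1, hz.mul_comm, hz.mul_assoc]

lemma eq_inv_of_mul_mul_eq_self {w b : L} (h : (w * b) * z = w) : b = z⁻¹ := by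
  have hbz : b * z = 1 := IPLoop.mul_left_cancel (by rw [← hz.mul_assoc, h, mul_one])
  rw [← mul_inv_cancel_right z b, hbz, one_mul]

end inCenter

lemma assoc_mul_inv {p q r : L} (hA : inCenter (assoc p q r)) :
    assoc p (q * r) r⁻¹ = (assoc p q r)⁻¹ := by
  apply hA.eq_inv_of_mul_mul_eq_self (w := p * q)
  calc ((p * q) * assoc p (q * r) r⁻¹) * assoc p q r
      = ((p * (q * r)) * r⁻¹) * assoc p q r := by
        rw [mul_mul_eq_mul_mul_assoc p (q * r), mul_inv_cancel_right]
    _ = ((p * q) * r) * r⁻¹ := by rw [← hA.mul_right_comm, ← mul_mul_eq_mul_mul_assoc]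
    _ = p * q := mul_inv_cancel_right r (p * q)

namespace IsMoufang

variable (hM : IsMoufang L)
include hM

lemma flexible (c e : L) : (c * e) * c = c * (e * c) := by
  simpa only [one_mul] using hM c 1 e

lemma assoc_mul_self {p q r : L} (hA : inCenter (assoc p q r)) :
    assoc p (q * r) q = (assoc p q r)⁻¹ := by
  apply hA.eq_inv_of_mul_mul_eq_self (w := p * ((q * r) * q))
  calc (p * ((q * r) * q) * assoc p (q * r) q) * assoc p q r
      = ((p * (q * r)) * assoc p q r) * q := by
        rw [← mul_mul_eq_mul_mul_assoc, hA.mul_right_comm]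
    _ = p * ((q * r) * q) := by
        rw [← mul_mul_eq_mul_mul_assoc, hM q p r, hM.flexible]

lemma assoc_self_mul (hA : ∀ a b c : L, inCenter (assoc a b c)) (x y z : L) :
    assoc x y (y * z) = assoc x y z := by
  have h := hM.assoc_mul_self (hA x (y * z) z⁻¹)
  rw [mul_inv_cancel_right, assoc_mul_inv (hA x y z), IPLoop.inv_inv] at h
  exact h

end IsMoufang

end IPLoop

open IPLoop in
/-- In a Moufang loop of class at most 2, the κ-isotope product satisfies
`(cκ)(κ⁻¹d) = (cd)·[c,κ,d]`. -/
theorem stmt18 {L : Type*} [IPLoop L] (hM : IsMoufang L) (h2 : ClassTwo L)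
    (c d κ : L) :
    (c * κ) * (κ⁻¹ * d) = (c * d) * assoc c κ d := by
  have h := hM.assoc_self_mul h2.2 c κ (κ⁻¹ * d)
  rw [IPLoop.mul_inv_cancel_left] at h
  rw [mul_mul_eq_mul_mul_assoc, IPLoop.mul_inv_cancel_left, h]
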